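/- arXiv:1702.01887 — 2 statements merged into one kernel-verified Lean document; each statement's English description precedes it below -/
import Mathlib

section
/- If a family (fᵢ)_{i∈I} in a Hilbert space H is obtained from a frame (gᵢ)_{i∈I∪J} (J finite, disjoint from I) by removing the finitely many elements indexed by J, then (fᵢ) is either a frame for H or it is incomplete. -/
/-!
Let `Q_I x = ∑_{i ∈ I} |⟨x, gᵢ⟩|²`. The upper frame bound passes to the subfamily for free.
If the lower one fails, there are unit vectors `xₙ` with `Q_I xₙ → 0`; by Tychonoff and the Riesz
representation theorem they have a weak limit `z` along an ultrafilter. Each `⟨z, gᵢ⟩`, `i ∈ I`,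
vanishes, so `z = 0` when `(gᵢ)_{i ∈ I}` is complete. Since `J` is finite, weak convergence to `0`
then forces the `J`-part of the frame sum to tend to `0` as well, contradicting the lower frame
bound of `g` at the unit vectors `xₙ`.
-/

open Filter Topology

/-- A family is a frame if it satisfies the two frame inequalities. -/
def IsFrame {ι H : Type*} [NormedAddCommGroup H] [InnerProductSpace ℂ H]
    (f : ι → H) : Prop :=
  ∃ A B : ℝ, 0 < A ∧ A ≤ B ∧ ∀ x : H,
    A * ‖x‖ ^ 2 ≤ (∑' i, ‖(inner ℂ x (f i) : ℂ)‖ ^ 2) ∧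
    (∑' i, ‖(inner ℂ x (f i) : ℂ)‖ ^ 2) ≤ B * ‖x‖ ^ 2

/-- A family is complete if its closed linear span is the whole space. -/
def CompleteSys {ι H : Type*} [NormedAddCommGroup H] [InnerProductSpace ℂ H]
    (f : ι → H) : Prop :=
  (Submodule.span ℂ (Set.range f)).topologicalClosure = ⊤

section

variable {H : Type*} [NormedAddCommGroup H] [InnerProductSpace ℂ H]

lemma exists_tendsto_inner_of_norm_le [CompleteSpace H] {α : Type*} (x : α → H) {C : ℝ}
    (hx : ∀ a, ‖x a‖ ≤ C) (U : Ultrafilter α) :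
    ∃ z : H, ∀ y, Tendsto (fun a => inner ℂ (x a) y) U (𝓝 (inner ℂ z y)) := by
  have hbound : ∀ a y, ‖inner ℂ (x a) y‖ ≤ C * ‖y‖ := fun a y =>
    (norm_inner_le_norm _ _).trans (by gcongr; exact hx a)
  obtain ⟨L, hLC, hL⟩ :=
    (isCompact_univ_pi fun y : H => isCompact_closedBall (0 : ℂ) (C * ‖y‖)).ultrafilter_le_nhds'
      (U.map fun a y => inner ℂ (x a) y) <| Ultrafilter.mem_map.2 <|
        univ_mem' fun a => Set.mem_univ_pi.2 fun y => by simpa using hbound a y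
  have hT : Tendsto (fun a y => innerₛₗ ℂ (x a) y) U (𝓝 L) := hL
  let Φ : StrongDual ℂ H := (linearMapOfTendsto L _ hT).mkContinuous C fun y => by
    simpa [linearMapOfTendsto_apply] using (Set.mem_univ_pi.1 hLC) y
  refine ⟨(InnerProductSpace.toDual ℂ H).symm Φ, fun y => ?_⟩
  rw [InnerProductSpace.toDual_symm_apply]
  exact tendsto_pi_nhds.1 hT y

lemma CompleteSys.eq_zero_of_forall_inner_eq_zero [CompleteSpace H] {ι : Type*} {f : ι → H}
    (hf : CompleteSys f) {z : H} (hz : ∀ i, inner ℂ z (f i) = 0) : z = 0 := by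
  rw [CompleteSys, Submodule.topologicalClosure_eq_top_iff] at hf
  have hspan : Submodule.span ℂ (Set.range f) ≤ (ℂ ∙ z)ᗮ := Submodule.span_le.2 <|
    Set.range_subset_iff.2 fun i => Submodule.mem_orthogonal_singleton_iff_inner_right.2 (hz i)
  have hz' : z ∈ (Submodule.span ℂ (Set.range f))ᗮ := (Submodule.mem_orthogonal' _ _).2
    fun _ hu => Submodule.mem_orthogonal_singleton_iff_inner_right.1 (hspan hu)
  simpa [hf] using hz'

noncomputable def frameSum {ι : Type*} (f : ι → H) (x : H) : ℝ :=
  ∑' i, ‖inner ℂ x (f i)‖ ^ 2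

section frameSum

variable {ι : Type*} {f : ι → H}

lemma frameSum_nonneg (x : H) : 0 ≤ frameSum f x :=
  tsum_nonneg fun _ => sq_nonneg _

lemma frameSum_smul (c : ℂ) (x : H) : frameSum f (c • x) = ‖c‖ ^ 2 * frameSum f x := by
  simp only [frameSum, inner_smul_left, norm_mul, RCLike.norm_conj, mul_pow, tsum_mul_left]

lemma mul_sq_le_frameSum {δ : ℝ} (hδ : ∀ x : H, ‖x‖ = 1 → δ ≤ frameSum f x) (x : H) :
    δ * ‖x‖ ^ 2 ≤ frameSum f x := by
  rcases eq_or_ne x 0 with rfl | hx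
  · simpa using frameSum_nonneg (f := f) (0 : H)
  have hxn : ‖x‖ ≠ 0 := norm_ne_zero_iff.2 hx
  have hunit : ‖((‖x‖ : ℂ)⁻¹ • x)‖ = 1 := by
    rw [norm_smul, norm_inv, Complex.norm_real, norm_norm, inv_mul_cancel₀ hxn]
  have hx_eq : x = (‖x‖ : ℂ) • ((‖x‖ : ℂ)⁻¹ • x) := by
    rw [smul_inv_smul₀ (by exact_mod_cast hxn)]
  calc δ * ‖x‖ ^ 2 ≤ frameSum f ((‖x‖ : ℂ)⁻¹ • x) * ‖x‖ ^ 2 := by gcongr; exact hδ _ hunit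
    _ = frameSum f x := by
      conv_rhs => rw [hx_eq, frameSum_smul, Complex.norm_real, norm_norm]
      ring

lemma sq_norm_inner_le_frameSum {x : H} (hf : Summable fun i => ‖inner ℂ x (f i)‖ ^ 2) (i : ι) :
    ‖inner ℂ x (f i)‖ ^ 2 ≤ frameSum f x :=
  hf.le_tsum i fun _ _ => sq_nonneg _

end frameSum

namespace IsFrame

variable {ι : Type*} {f : ι → H}

lemma summable (hf : IsFrame f) (x : H) : Summable fun i => ‖inner ℂ x (f i)‖ ^ 2 := by
  obtain ⟨A, B, hA, -, hfr⟩ := hf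
  rcases eq_or_ne x 0 with rfl | hx
  · simp
  by_contra hns
  have hlow := (hfr x).1
  rw [tsum_eq_zero_of_not_summable hns] at hlow
  have : 0 < A * ‖x‖ ^ 2 := by positivity
  linarith

variable {I J : Type*} {g : I ⊕ J → H}

lemma frameSum_eq_add (hg : IsFrame g) (x : H) :
    frameSum g x = frameSum (g ∘ Sum.inl) x + frameSum (g ∘ Sum.inr) x :=
  Summable.tsum_sum ((hg.summable x).comp_injective Sum.inl_injective)
    ((hg.summable x).comp_injective Sum.inr_injective)

lemma not_tendsto_frameSum_inl [CompleteSpace H] [Finite J] (hg : IsFrame g)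
    (hc : CompleteSys (g ∘ Sum.inl)) {α : Type*} {l : Filter α} [l.NeBot] {x : α → H}
    (hx : ∀ a, ‖x a‖ = 1) : ¬ Tendsto (fun a => frameSum (g ∘ Sum.inl) (x a)) l (𝓝 0) := by
  intro hI
  have := Fintype.ofFinite J
  set U := Ultrafilter.of l
  have hIU : Tendsto (fun a => frameSum (g ∘ Sum.inl) (x a)) U (𝓝 0) :=
    hI.mono_left (Ultrafilter.of_le l)
  obtain ⟨z, hz⟩ := exists_tendsto_inner_of_norm_le x (fun a => (hx a).le) U
  have hz0 : z = 0 := by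
    refine hc.eq_zero_of_forall_inner_eq_zero fun i => ?_
    refine tendsto_nhds_unique (hz _) (tendsto_zero_iff_norm_tendsto_zero.2 ?_)
    refine squeeze_zero (fun _ => norm_nonneg _) (fun a => ?_) (by simpa using hIU.sqrt)
    exact Real.le_sqrt_of_sq_le
      (sq_norm_inner_le_frameSum ((hg.summable (x a)).comp_injective Sum.inl_injective) i)
  have hJ : Tendsto (fun a => frameSum (g ∘ Sum.inr) (x a)) U (𝓝 0) := by
    simp only [frameSum, tsum_fintype]
    simpa [hz0] using tendsto_finsetSum Finset.univ fun j _ => ((hz (g (.inr j))).norm.pow 2)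
  have hsum : Tendsto (fun a => frameSum g (x a)) U (𝓝 0) := by
    simpa only [hg.frameSum_eq_add, add_zero] using hIU.add hJ
  obtain ⟨A, B, hA, -, hfr⟩ := hg
  have hlow : ∀ a, A ≤ frameSum g (x a) := fun a => by
    have := (hfr (x a)).1
    rwa [hx a, one_pow, mul_one] at this
  have : A ≤ 0 := ge_of_tendsto hsum (Eventually.of_forall hlow)
  linarith

lemma exists_pos_le_frameSum_inl [CompleteSpace H] [Finite J] (hg : IsFrame g)
    (hc : CompleteSys (g ∘ Sum.inl)) :
    ∃ δ > 0, ∀ x : H, ‖x‖ = 1 → δ ≤ frameSum (g ∘ Sum.inl) x := by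
  by_contra! h
  choose x hx hsmall using fun n : ℕ => h (1 / (n + 1)) Nat.one_div_pos_of_nat
  refine hg.not_tendsto_frameSum_inl hc hx (l := atTop) ?_
  exact squeeze_zero (fun _ => frameSum_nonneg _) (fun n => (hsmall n).le)
    tendsto_one_div_add_atTop_nhds_zero_nat

end IsFrame

end

/-- Removing finitely many elements (indexed by a finite `J` disjoint from `I`)
from a frame `(gᵢ)_{i ∈ I ∪ J}` leaves either a frame or an incomplete family. -/
theorem stmt13 {H I J : Type*} [NormedAddCommGroup H] [InnerProductSpace ℂ H]
    [CompleteSpace H] [Finite J]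
    (g : I ⊕ J → H) (hg : IsFrame g) :
    IsFrame (g ∘ Sum.inl) ∨ ¬ CompleteSys (g ∘ Sum.inl) := by
  refine imp_iff_or_not.1 fun hc => ?_
  obtain ⟨δ, hδ, hδle⟩ := hg.exists_pos_le_frameSum_inl hc
  have hsplit := hg.frameSum_eq_add
  obtain ⟨A, B, hA, hAB, hfr⟩ := hg
  refine ⟨min δ B, B, lt_min hδ (hA.trans_le hAB), min_le_right _ _, fun x => ⟨?_, ?_⟩⟩
  · calc min δ B * ‖x‖ ^ 2 ≤ δ * ‖x‖ ^ 2 := by gcongr; exact min_le_left _ _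
      _ ≤ frameSum (g ∘ Sum.inl) x := mul_sq_le_frameSum hδle x
  · calc frameSum (g ∘ Sum.inl) x
        ≤ frameSum (g ∘ Sum.inl) x + frameSum (g ∘ Sum.inr) x := by
          linarith [frameSum_nonneg (f := g ∘ Sum.inr) x]
      _ = frameSum g x := (hsplit x).symm
      _ ≤ B * ‖x‖ ^ 2 := (hfr x).2
end

section
/- For every even function f ∈ L²[−1/2,1/2] (i.e. f(x) = f(−x) a.e.), one has Σ_{n≥0} |f̂(n)|² + Σ_{n≤−1} |(x f)^(n)|² ≥ (11/24)‖f‖², where f̂(n) and (xf)^(n) denote the n-th Fourier coefficients of f and of x ↦ x·f(x) respectively. -/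
open MeasureTheory Real

/-- The `n`-th Fourier coefficient `∫_{-1/2}^{1/2} f(x) e^{-2πinx} dx`. -/
noncomputable def fourierCoef (f : ℝ → ℂ) (n : ℤ) : ℂ :=
  ∫ x in (-(1/2) : ℝ)..(1/2), f x * Complex.exp (-(Complex.I * (2 * π * n * x : ℝ)))

/-!
By Parseval, `Σ_{n ∈ ℤ} |f̂(n)|² = ‖f‖²`, and evenness of `f` gives `f̂(-n) = f̂(n)`, so
`Σ_{n ≥ 0} |f̂(n)|² = (‖f‖² + |f̂(0)|²) / 2 ≥ ‖f‖² / 2`, which already exceeds `(11/24)‖f‖²`;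
the sum involving `x f` is nonnegative.
-/

lemma HasSum.nat_of_neg_eq {g : ℤ → ℝ} {S : ℝ} (h : HasSum g S) (hg : ∀ n, g (-n) = g n) :
    HasSum (fun n : ℕ => g n) ((S + g 0) / 2) := by
  simpa [hg] using h.nat_add_neg.div_const 2

lemma fourierCoef_eq_fourierCoeffOn (f : ℝ → ℂ) (n : ℤ) :
    fourierCoef f n = fourierCoeffOn (by norm_num : (-(1/2) : ℝ) < 1/2) f n := by
  rw [fourierCoeffOn_eq_integral, fourierCoef]
  norm_num only [one_div_one, one_smul]
  refine intervalIntegral.integral_congr fun x _ => ?_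
  rw [fourier_coe_apply, smul_eq_mul, mul_comm]
  congr 2
  push_cast
  ring

lemma hasSum_sq_fourierCoef {f : ℝ → ℂ}
    (hf : MemLp f 2 (volume.restrict (Set.Ioc (-(1/2) : ℝ) (1/2)))) :
    HasSum (fun n => ‖fourierCoef f n‖ ^ 2) (∫ x in (-(1/2) : ℝ)..(1/2), ‖f x‖ ^ 2) := by
  simp only [fourierCoef_eq_fourierCoeffOn]
  convert hasSum_sq_fourierCoeffOn (by norm_num) hf using 1
  norm_num

lemma fourierCoef_neg_of_ae_even {f : ℝ → ℂ}
    (heven : ∀ᵐ x ∂(volume.restrict (Set.Ioc (-(1/2) : ℝ) (1/2))), f x = f (-x)) (n : ℤ) :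
    fourierCoef f (-n) = fourierCoef f n := by
  have hreflect := intervalIntegral.integral_comp_neg (a := -(1/2)) (b := 1/2)
    fun x => f x * Complex.exp (-(Complex.I * (2 * π * (-n : ℤ) * x : ℝ)))
  rw [neg_neg] at hreflect
  rw [fourierCoef, ← hreflect, fourierCoef]
  refine intervalIntegral.integral_congr_ae_restrict ?_
  rw [Set.uIoc_of_le (by norm_num)]
  filter_upwards [heven] with x hx
  rw [← hx]
  push_cast
  ring_nf

/-- For every a.e. even `f ∈ L²[−1/2,1/2]`,
`Σ_{n≥0} |f̂(n)|² + Σ_{n≤−1} |(xf)^(n)|² ≥ (11/24)‖f‖²`. -/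
theorem stmt17 (f : ℝ → ℂ)
    (hf : MemLp f 2 (volume.restrict (Set.Ioc (-(1/2) : ℝ) (1/2))))
    (heven : ∀ᵐ x ∂(volume.restrict (Set.Ioc (-(1/2) : ℝ) (1/2))), f x = f (-x)) :
    11 / 24 * (∫ x in (-(1/2) : ℝ)..(1/2), ‖f x‖ ^ 2) ≤
      (∑' n : ℕ, ‖fourierCoef f n‖ ^ 2) +
        ∑' n : {m : ℤ // m ≤ -1}, ‖fourierCoef (fun x => (x : ℂ) * f x) n.1‖ ^ 2 := by
  set S := ∫ x in (-(1/2) : ℝ)..(1/2), ‖f x‖ ^ 2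
  have hParseval : HasSum (fun n => ‖fourierCoef f n‖ ^ 2) S := hasSum_sq_fourierCoef hf
  have hS : 0 ≤ S := hParseval.nonneg fun _ => by positivity
  have hhalf := hParseval.nat_of_neg_eq fun n => by rw [fourierCoef_neg_of_ae_even heven]
  calc 11 / 24 * S ≤ (S + ‖fourierCoef f 0‖ ^ 2) / 2 := by
        nlinarith [norm_nonneg (fourierCoef f 0)]
    _ = ∑' n : ℕ, ‖fourierCoef f n‖ ^ 2 := hhalf.tsum_eq.symm
    _ ≤ _ := le_add_of_nonneg_right (tsum_nonneg fun _ => by positivity)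
end
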